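/- Let H₁, H₂ be complex Hilbert spaces, Π : H₁ → H₁ an orthogonal projection, and A : H₁ → H₂ a bijective bounded antilinear isometry. Define Q : H₁ ⊕ H₂ → H₁ ⊕ H₂ by Q(ψ ⊕ φ) := Πψ ⊕ (φ − A Π A⁻¹ φ). Then Q is a bounded self-adjoint operator with 0 ≤ Q ≤ 1, and moreover Q is a projection (Q² = Q). -/

import Mathlib

/-!
Because `A` is antiunitary, the two complex conjugations in `A Π A⁻¹` cancel and it is again a
complex-linear orthogonal projection on `H₂`, hence so is its complement `I - A Π A⁻¹`. Thus `Q` is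
the direct sum of two orthogonal projections, and every claim reduces to the facts
`Re ⟪x, P x⟫ = ‖P x‖² ≤ ‖x‖²` and `P² = P` for an orthogonal projection `P`.
-/

open scoped ComplexConjugate

local notation "⟪" x ", " y "⟫" => @inner ℂ _ _ x y

namespace LinearMap.IsSymmetricProjection

open scoped InnerProductSpace

variable {𝕜 E F : Type*} [RCLike 𝕜] [NormedAddCommGroup E] [InnerProductSpace 𝕜 E]
  [NormedAddCommGroup F] [InnerProductSpace 𝕜 F] {T : E →ₗ[𝕜] E}

theorem apply_apply (hT : T.IsSymmetricProjection) (x : E) : T (T x) = T x :=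
  LinearMap.congr_fun hT.isIdempotentElem.eq x

theorem re_inner_self_apply_eq_norm_sq (hT : T.IsSymmetricProjection) (x : E) :
    RCLike.re ⟪x, T x⟫_𝕜 = ‖T x‖ ^ 2 := by
  rw [← hT.apply_apply x, ← hT.isSymmetric, hT.apply_apply, inner_self_eq_norm_sq]

theorem norm_apply_le (hT : T.IsSymmetricProjection) (x : E) : ‖T x‖ ≤ ‖x‖ := by
  obtain ⟨K, _, rfl⟩ := LinearMap.isSymmetricProjection_iff_eq_coe_starProjection.mp hT
  exact K.norm_starProjection_apply_le x

theorem one_sub (hT : T.IsSymmetricProjection) : (1 - T).IsSymmetricProjection :=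
  ⟨hT.isIdempotentElem.one_sub, LinearMap.IsSymmetric.one.sub hT.isSymmetric⟩

theorem conj_antiunitary (hT : T.IsSymmetricProjection) (e : E ≃ₗ⋆[𝕜] F)
    (he : ∀ x y, ⟪e x, e y⟫_𝕜 = ⟪y, x⟫_𝕜) :
    (e.toLinearMap ∘ₛₗ T ∘ₛₗ e.symm.toLinearMap).IsSymmetricProjection := by
  refine ⟨LinearMap.ext fun x => ?_, fun x y => ?_⟩
  · simp [Module.End.mul_apply, hT.apply_apply]
  · calc ⟪e (T (e.symm x)), y⟫_𝕜 = ⟪e (T (e.symm x)), e (e.symm y)⟫_𝕜 := by rw [e.apply_symm_apply]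
      _ = ⟪e.symm y, T (e.symm x)⟫_𝕜 := he _ _
      _ = ⟪T (e.symm y), e.symm x⟫_𝕜 := (hT.isSymmetric _ _).symm
      _ = ⟪e (e.symm x), e (T (e.symm y))⟫_𝕜 := (he _ _).symm
      _ = ⟪x, e (T (e.symm y))⟫_𝕜 := by rw [e.apply_symm_apply]

end LinearMap.IsSymmetricProjection

theorem stmt_4_general {H₁ H₂ : Type*}
    [NormedAddCommGroup H₁] [InnerProductSpace ℂ H₁] [CompleteSpace H₁]
    [NormedAddCommGroup H₂] [InnerProductSpace ℂ H₂]
    (Pj : H₁ →L[ℂ] H₁) (hPjsa : IsSelfAdjoint Pj) (hPjidem : Pj.comp Pj = Pj)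
    (A : H₁ → H₂) (B : H₂ → H₁)
    (hAB : ∀ φ : H₂, A (B φ) = φ) (hBA : ∀ ψ : H₁, B (A ψ) = ψ)
    (hAadd : ∀ ψ ψ' : H₁, A (ψ + ψ') = A ψ + A ψ')
    (hAsmul : ∀ (c : ℂ) (ψ : H₁), A (c • ψ) = conj c • A ψ)
    (hAanti : ∀ ψ ψ' : H₁, ⟪A ψ, A ψ'⟫ = ⟪ψ', ψ⟫) :
    let Q : H₁ × H₂ → H₁ × H₂ := fun p => (Pj p.1, p.2 - A (Pj (B p.2)))
    (∀ p q : H₁ × H₂, ⟪(Q p).1, q.1⟫ + ⟪(Q p).2, q.2⟫ = ⟪p.1, (Q q).1⟫ + ⟪p.2, (Q q).2⟫) ∧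
    (∀ p : H₁ × H₂, 0 ≤ (⟪p.1, (Q p).1⟫ + ⟪p.2, (Q p).2⟫).re) ∧
    (∀ p : H₁ × H₂, (⟪p.1, (Q p).1⟫ + ⟪p.2, (Q p).2⟫).re ≤ ‖p.1‖ ^ 2 + ‖p.2‖ ^ 2) ∧
    (∀ p : H₁ × H₂, Q (Q p) = Q p) ∧
    (∃ M : ℝ, 0 ≤ M ∧ ∀ p : H₁ × H₂,
      ‖(Q p).1‖ ^ 2 + ‖(Q p).2‖ ^ 2 ≤ M * (‖p.1‖ ^ 2 + ‖p.2‖ ^ 2)) := by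
  intro Q
  let e : H₁ ≃ₗ⋆[ℂ] H₂ :=
    { toFun := A, map_add' := hAadd, map_smul' := hAsmul, invFun := B,
      left_inv := hBA, right_inv := hAB }
  let P : H₁ →ₗ[ℂ] H₁ := Pj
  let R : H₂ →ₗ[ℂ] H₂ := 1 - e.toLinearMap ∘ₛₗ P ∘ₛₗ e.symm.toLinearMap
  have hP : P.IsSymmetricProjection :=
    ContinuousLinearMap.isStarProjection_iff_isSymmetricProjection.mp ⟨hPjidem, hPjsa⟩
  have hR : R.IsSymmetricProjection := (hP.conj_antiunitary e hAanti).one_sub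
  have hQ : ∀ p, Q p = (P p.1, R p.2) := fun _ => rfl
  have hre : ∀ p : H₁ × H₂, (⟪p.1, (Q p).1⟫ + ⟪p.2, (Q p).2⟫).re = ‖P p.1‖ ^ 2 + ‖R p.2‖ ^ 2 := by
    intro p
    rw [hQ, Complex.add_re, ← RCLike.re_to_complex, ← RCLike.re_to_complex,
      hP.re_inner_self_apply_eq_norm_sq, hR.re_inner_self_apply_eq_norm_sq]
  refine ⟨fun p q => ?_, fun p => ?_, fun p => ?_, fun p => ?_, 1, zero_le_one, fun p => ?_⟩
  · rw [hQ, hQ, hP.isSymmetric, hR.isSymmetric]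
  · rw [hre]
    positivity
  · rw [hre]
    gcongr
    exacts [hP.norm_apply_le _, hR.norm_apply_le _]
  · rw [hQ, hQ, hP.apply_apply, hR.apply_apply]
  · rw [hQ, one_mul]
    gcongr
    exacts [hP.norm_apply_le _, hR.norm_apply_le _]

/-- For an orthogonal projection `Pj` on `H₁` and a bijective bounded antilinear isometry
`A : H₁ → H₂` (with inverse `B`), the operator `Q(ψ ⊕ φ) := Pjψ ⊕ (φ - A Pj A⁻¹ φ)` on `H₁ ⊕ H₂`
is bounded, self-adjoint, satisfies `0 ≤ Q ≤ 1`, and is a projection. -/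
theorem stmt_4 {H₁ H₂ : Type*}
    [NormedAddCommGroup H₁] [InnerProductSpace ℂ H₁] [CompleteSpace H₁]
    [NormedAddCommGroup H₂] [InnerProductSpace ℂ H₂] [CompleteSpace H₂]
    (Pj : H₁ →L[ℂ] H₁) (hPjsa : IsSelfAdjoint Pj) (hPjidem : Pj.comp Pj = Pj)
    (A : H₁ → H₂) (B : H₂ → H₁)
    (hAB : ∀ φ : H₂, A (B φ) = φ) (hBA : ∀ ψ : H₁, B (A ψ) = ψ)
    (hAadd : ∀ ψ ψ' : H₁, A (ψ + ψ') = A ψ + A ψ')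
    (hAsmul : ∀ (c : ℂ) (ψ : H₁), A (c • ψ) = conj c • A ψ)
    (hAanti : ∀ ψ ψ' : H₁, ⟪A ψ, A ψ'⟫ = ⟪ψ', ψ⟫) :
    let Q : H₁ × H₂ → H₁ × H₂ := fun p => (Pj p.1, p.2 - A (Pj (B p.2)))
    (∀ p q : H₁ × H₂, ⟪(Q p).1, q.1⟫ + ⟪(Q p).2, q.2⟫ = ⟪p.1, (Q q).1⟫ + ⟪p.2, (Q q).2⟫) ∧
    (∀ p : H₁ × H₂, 0 ≤ (⟪p.1, (Q p).1⟫ + ⟪p.2, (Q p).2⟫).re) ∧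
    (∀ p : H₁ × H₂, (⟪p.1, (Q p).1⟫ + ⟪p.2, (Q p).2⟫).re ≤ ‖p.1‖ ^ 2 + ‖p.2‖ ^ 2) ∧
    (∀ p : H₁ × H₂, Q (Q p) = Q p) ∧
    (∃ M : ℝ, 0 ≤ M ∧ ∀ p : H₁ × H₂,
      ‖(Q p).1‖ ^ 2 + ‖(Q p).2‖ ^ 2 ≤ M * (‖p.1‖ ^ 2 + ‖p.2‖ ^ 2)) :=
  stmt_4_general Pj hPjsa hPjidem A B hAB hBA hAadd hAsmul hAanti
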